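/- arXiv:2401.07925 — 3 statements merged into one kernel-verified Lean document; each statement's English description precedes it below -/
import Mathlib

section
/- Let p be an odd prime and f₁, f₂ : F_p → ℂ. With T(f₁,f₂)(s) = ∑_{n≠s} f₁(s−n) f₂(n) K(s−n,n), one has ‖T(f₁,f₂)‖₂² ≤ p^{-1/2}‖f₁‖₂²‖f₂‖₂² + ‖f₂‖₂² · |Λ₁(f₁)|^{1/2}, where Λ₁(f) = ∑_{s₁,s₂,n₁,n₂ : n₁≠s₁, n₁≠s₂} f(s₁−n₁) conj(f(s₂−n₁)) conj(f(s₁−n₂)) f(s₂−n₂) K(s₁−n₁,n₁) conj(K(s₁−n₂,n₂)) conj(K(s₂−n₁,n₁)) K(s₂−n₂,n₂). -/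
open Finset Complex

/-- `e_p(x) = exp(-2πi x / p)` via the canonical lift `x.val`. -/
noncomputable def ep (p : ℕ) (x : ZMod p) : ℂ :=
  Complex.exp (-2 * Real.pi * Complex.I * (x.val : ℂ) / p)

/-- Normalized quadratic Gauss sum kernel `K(a,b) = (1/p) ∑_y e_p(a y² + b y)`. -/
noncomputable def Kker (p : ℕ) [NeZero p] (a b : ZMod p) : ℂ :=
  (p : ℂ)⁻¹ * ∑ y : ZMod p, ep p (a * y ^ 2 + b * y)

/-- `‖f‖₂² = ∑_x |f x|²`. -/
noncomputable def nsq (p : ℕ) [NeZero p] (f : ZMod p → ℂ) : ℝ :=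
  ∑ x : ZMod p, ‖f x‖ ^ 2

/-- The bilinear operator `T(f₁,f₂)(s) = ∑_{n ≠ s} f₁(s−n) f₂(n) K(s−n,n)`. -/
noncomputable def Tbil (p : ℕ) [NeZero p] (f₁ f₂ : ZMod p → ℂ) (s : ZMod p) : ℂ :=
  ∑ n ∈ Finset.univ.filter (fun n => n ≠ s), f₁ (s - n) * f₂ n * Kker p (s - n) n

/-- `Λ₁(f)`: the fourfold sum over `s₁,s₂,n₁,n₂` with `n₁ ≠ s₁` and `n₁ ≠ s₂`. -/
noncomputable def Lambda1 (p : ℕ) [NeZero p] (f : ZMod p → ℂ) : ℂ :=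
  ∑ s₁ : ZMod p, ∑ s₂ : ZMod p, ∑ n₂ : ZMod p,
    ∑ n₁ ∈ Finset.univ.filter (fun n₁ => n₁ ≠ s₁ ∧ n₁ ≠ s₂),
      f (s₁ - n₁) * (starRingEnd ℂ) (f (s₂ - n₁)) * (starRingEnd ℂ) (f (s₁ - n₂)) *
        f (s₂ - n₂) * Kker p (s₁ - n₁) n₁ * (starRingEnd ℂ) (Kker p (s₁ - n₂) n₂) *
        (starRingEnd ℂ) (Kker p (s₂ - n₁) n₁) * Kker p (s₂ - n₂) n₂

open scoped ComplexConjugate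

/-!
Write `T(s) = ∑ₙ u(s,n) - u(s,s)` with `u(s,n) = f₁(s-n) f₂(n) K(s-n,n)` and expand
`∑ₛ T(s) conj T(s)`. Against the full sum `∑ₙ u(s,n)` this gives
`∑_{n₁,n₂} f₂(n₁) conj f₂(n₂) A(n₁,n₂)` with `A = kerCorr p f₁`, and `∑ |A|² = Λ₁(f₁)`, so
Cauchy–Schwarz in `(n₁,n₂)` bounds it by `‖f₂‖₂² |Λ₁(f₁)|^{1/2}`. The diagonal correction
`∑ₛ T(s) conj u(s,s)` reduces to `s = 0` because `K(0,b) = [b = 0]`, and there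
`|T(0)| ≤ p^{-1/2} ‖f₁‖₂ ‖f₂‖₂` because `|K(a,b)| = p^{-1/2}` for `a ≠ 0`, a quadratic Gauss sum.
-/

namespace AddChar

variable {F : Type*} [Field F] [Fintype F] {ψ : AddChar F ℂ}

lemma sum_quadratic_mul_conj (hψ : ψ ≠ 1) (hF : ringChar F ≠ 2) {a : F} (ha : a ≠ 0) (b : F) :
    (∑ y, ψ (a * y ^ 2 + b * y)) * conj (∑ y, ψ (a * y ^ 2 + b * y)) = Fintype.card F := by
  classical
  set q : F → F := fun y => a * y ^ 2 + b * y
  have h2a : ∀ h : F, 2 * a * h = 0 ↔ h = 0 := fun h => by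
    simp [Ring.two_ne_zero hF, ha]
  calc (∑ y, ψ (q y)) * conj (∑ y, ψ (q y))
      = ∑ z, ∑ y, ψ (q y) * ψ (-q z) := by
        simp_rw [map_sum, sum_mul_sum, map_neg_eq_conj]
        exact sum_comm
    _ = ∑ z, ∑ h, ψ (q h) * ψ (z * (2 * a * h)) := by
        refine sum_congr rfl fun z _ => ?_
        refine (Fintype.sum_equiv (Equiv.addLeft z) _ _ fun h => ?_).symm
        simp only [Equiv.coe_addLeft, ← map_add_eq_mul, q]
        ring_nf
    _ = ∑ h, ψ (q h) * ∑ z, ψ (z * (2 * a * h)) := by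
        rw [sum_comm]
        simp_rw [mul_sum]
    _ = Fintype.card F := by
        simp_rw [sum_mulShift _ (IsPrimitive.of_ne_one hψ), h2a]
        simp [q]

lemma norm_sum_quadratic (hψ : ψ ≠ 1) (hF : ringChar F ≠ 2) {a : F} (ha : a ≠ 0) (b : F) :
    ‖∑ y, ψ (a * y ^ 2 + b * y)‖ = √(Fintype.card F) := by
  rw [eq_comm, Real.sqrt_eq_iff_eq_sq (by positivity) (norm_nonneg _)]
  exact_mod_cast (sum_quadratic_mul_conj hψ hF ha b).symm.trans (mul_conj' _)

end AddChar

section Kernel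

variable {p : ℕ} [Fact p.Prime]

lemma ep_eq_inv_stdAddChar : ep p = ⇑(ZMod.stdAddChar⁻¹ : AddChar (ZMod p) ℂ) := by
  ext x
  rw [AddChar.inv_apply, AddChar.map_neg_eq_conj, ZMod.stdAddChar_apply, ZMod.toCircle_apply,
    ← Complex.exp_conj, ep]
  congr 1
  simp only [map_div₀, map_mul, map_natCast, map_ofNat, Complex.conj_ofReal,
    Complex.conj_I]
  ring

lemma inv_stdAddChar_ne_one : (ZMod.stdAddChar⁻¹ : AddChar (ZMod p) ℂ) ≠ 1 :=
  inv_ne_one.mpr <| by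
    simpa only [AddChar.mulShift_one] using ZMod.isPrimitive_stdAddChar p one_ne_zero

lemma Kker_eq_inv_stdAddChar (a b : ZMod p) :
    Kker p a b = (p : ℂ)⁻¹ * ∑ y, (ZMod.stdAddChar⁻¹ : AddChar (ZMod p) ℂ) (a * y ^ 2 + b * y) := by
  rw [Kker, ep_eq_inv_stdAddChar]

lemma norm_Kker (hodd : Odd p) {a : ZMod p} (ha : a ≠ 0) (b : ZMod p) :
    ‖Kker p a b‖ = (p : ℝ) ^ (-(1/2) : ℝ) := by
  have hchar : ringChar (ZMod p) ≠ 2 := by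
    rw [ZMod.ringChar_zmod_n]
    rintro rfl
    exact absurd hodd (by decide)
  rw [Kker_eq_inv_stdAddChar, norm_mul,
    AddChar.norm_sum_quadratic inv_stdAddChar_ne_one hchar ha, ZMod.card, norm_inv,
    Complex.norm_natCast, Real.sqrt_eq_rpow, ← Real.rpow_neg_one, ← Real.rpow_add]
  · norm_num
  · exact_mod_cast (Fact.out : p.Prime).pos

lemma Kker_zero_left (b : ZMod p) : Kker p 0 b = if b = 0 then 1 else 0 := by
  have hp : (p : ℂ) ≠ 0 := Nat.cast_ne_zero.mpr (Fact.out : p.Prime).ne_zero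
  simp_rw [Kker_eq_inv_stdAddChar, zero_mul, zero_add, mul_comm b,
    AddChar.sum_mulShift b (AddChar.IsPrimitive.of_ne_one inv_stdAddChar_ne_one), ZMod.card]
  split_ifs <;> simp [hp]

end Kernel

section Expansion

variable {p : ℕ}

noncomputable def kerCorr (p : ℕ) [NeZero p] (f : ZMod p → ℂ) (n₁ n₂ : ZMod p) : ℂ :=
  ∑ s ∈ univ.filter (fun s => s ≠ n₁),
    f (s - n₁) * conj (f (s - n₂)) * Kker p (s - n₁) n₁ * conj (Kker p (s - n₂) n₂)

lemma Tbil_eq_sum_sub [NeZero p] (f₁ f₂ : ZMod p → ℂ) (s : ZMod p) :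
    Tbil p f₁ f₂ s = ∑ n, f₁ (s - n) * f₂ n * Kker p (s - n) n - f₁ 0 * f₂ s * Kker p 0 s := by
  rw [Tbil, filter_ne', sum_erase_eq_sub (mem_univ s), sub_self]

lemma sum_Tbil_mul_conj_sum [NeZero p] (f₁ f₂ : ZMod p → ℂ) :
    ∑ s, Tbil p f₁ f₂ s * conj (∑ n, f₁ (s - n) * f₂ n * Kker p (s - n) n) =
      ∑ n₁, ∑ n₂, f₂ n₁ * conj (f₂ n₂) * kerCorr p f₁ n₁ n₂ := by
  simp only [Tbil, kerCorr, sum_filter, map_sum, sum_mul_sum]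
  simp only [mul_sum]
  rw [sum_comm]
  refine sum_congr rfl fun n₁ _ => ?_
  rw [sum_comm]
  refine sum_congr rfl fun n₂ _ => sum_congr rfl fun s _ => ?_
  by_cases h : s = n₁
  · simp [h]
  · simp only [ne_eq, h, Ne.symm h, not_false_eq_true, if_true, map_mul]
    ring

lemma sum_norm_sq_Tbil [Fact p.Prime] (f₁ f₂ : ZMod p → ℂ) :
    ((∑ s, ‖Tbil p f₁ f₂ s‖ ^ 2 : ℝ) : ℂ) =
      ∑ n₁, ∑ n₂, f₂ n₁ * conj (f₂ n₂) * kerCorr p f₁ n₁ n₂ -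
        Tbil p f₁ f₂ 0 * conj (f₁ 0 * f₂ 0) := by
  push_cast
  have hconj : ∀ s, conj (Tbil p f₁ f₂ s) =
      conj (∑ n, f₁ (s - n) * f₂ n * Kker p (s - n) n) - conj (f₁ 0 * f₂ s * Kker p 0 s) :=
    fun s => by rw [Tbil_eq_sum_sub, map_sub]
  simp_rw [← mul_conj', hconj, mul_sub, sum_sub_distrib, sum_Tbil_mul_conj_sum]
  congr 1
  rw [sum_eq_single 0 (fun s _ hs => by simp [Kker_zero_left, hs]) (by simp)]
  simp [Kker_zero_left]

lemma Lambda1_eq_sum_norm_sq_kerCorr [NeZero p] (f : ZMod p → ℂ) :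
    Lambda1 p f = ((∑ n₁, ∑ n₂, ‖kerCorr p f n₁ n₂‖ ^ 2 : ℝ) : ℂ) := by
  push_cast
  simp only [← mul_conj', kerCorr, sum_filter, map_sum, sum_mul_sum]
  simp only [Lambda1, sum_filter]
  symm
  refine (sum_congr rfl fun n₁ _ => sum_comm_cycle.symm).trans ?_
  refine sum_comm_cycle.symm.trans ?_
  refine sum_congr rfl fun s₁ _ => sum_congr rfl fun s₂ _ => sum_comm.trans ?_
  refine sum_congr rfl fun n₂ _ => sum_congr rfl fun n₁ _ => ?_
  by_cases h₁ : n₁ = s₁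
  · simp [h₁]
  by_cases h₂ : n₁ = s₂
  · simp [h₂]
  simp only [ne_eq, h₁, h₂, Ne.symm h₁, Ne.symm h₂, not_false_eq_true, and_self, if_true, map_mul,
    Complex.conj_conj]
  ring

end Expansion

lemma norm_sum_mul_conj_mul_le {ι : Type*} [Fintype ι] (g : ι → ℂ) (A : ι → ι → ℂ) :
    ‖∑ i, ∑ j, g i * conj (g j) * A i j‖ ≤ (∑ i, ‖g i‖ ^ 2) * √(∑ i, ∑ j, ‖A i j‖ ^ 2) := by
  calc ‖∑ i, ∑ j, g i * conj (g j) * A i j‖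
      ≤ ∑ i, ∑ j, ‖g i‖ * ‖g j‖ * ‖A i j‖ :=
        (norm_sum_le _ _).trans <| sum_le_sum fun i _ =>
          (norm_sum_le _ _).trans_eq <| by simp only [norm_mul, Complex.norm_conj]
    _ = ∑ ij : ι × ι, ‖g ij.1‖ * ‖g ij.2‖ * ‖A ij.1 ij.2‖ := by
        rw [Fintype.sum_prod_type]
    _ ≤ √(∑ ij : ι × ι, (‖g ij.1‖ * ‖g ij.2‖) ^ 2) * √(∑ ij : ι × ι, ‖A ij.1 ij.2‖ ^ 2) :=
        Real.sum_mul_le_sqrt_mul_sqrt _ _ _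
    _ = (∑ i, ‖g i‖ ^ 2) * √(∑ i, ∑ j, ‖A i j‖ ^ 2) := by
        simp only [Fintype.sum_prod_type, mul_pow, ← mul_sum, ← sum_mul]
        rw [Real.sqrt_mul_self (by positivity)]

section Estimates

variable {p : ℕ}

lemma nsq_nonneg [NeZero p] (f : ZMod p → ℂ) : 0 ≤ nsq p f := by
  unfold nsq
  positivity

lemma norm_le_sqrt_nsq [NeZero p] (f : ZMod p → ℂ) (x : ZMod p) : ‖f x‖ ≤ √(nsq p f) :=
  Real.le_sqrt_of_sq_le <|
    single_le_sum (f := fun y => ‖f y‖ ^ 2) (fun _ _ => sq_nonneg _) (mem_univ x)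

lemma norm_Tbil_le [Fact p.Prime] (hodd : Odd p) (f₁ f₂ : ZMod p → ℂ) (s : ZMod p) :
    ‖Tbil p f₁ f₂ s‖ ≤ (p : ℝ) ^ (-(1/2) : ℝ) * (√(nsq p f₁) * √(nsq p f₂)) := by
  set c : ℝ := (p : ℝ) ^ (-(1/2) : ℝ)
  have hshift : ∑ n, ‖f₁ (s - n)‖ ^ 2 = nsq p f₁ :=
    Fintype.sum_equiv (Equiv.subLeft s) _ _ fun _ => rfl
  calc ‖Tbil p f₁ f₂ s‖
      ≤ ∑ n ∈ univ.filter (fun n => n ≠ s), ‖f₁ (s - n) * f₂ n * Kker p (s - n) n‖ :=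
        norm_sum_le _ _
    _ = ∑ n ∈ univ.filter (fun n => n ≠ s), c * (‖f₁ (s - n)‖ * ‖f₂ n‖) :=
        sum_congr rfl fun n hn => by
          rw [norm_mul, norm_mul,
            norm_Kker hodd (sub_ne_zero.mpr (mem_filter.mp hn).2.symm)]
          ring
    _ ≤ ∑ n, c * (‖f₁ (s - n)‖ * ‖f₂ n‖) :=
        sum_le_sum_of_subset_of_nonneg (filter_subset _ _) fun _ _ _ => by positivity
    _ ≤ c * (√(nsq p f₁) * √(nsq p f₂)) := by
        rw [← mul_sum, ← hshift]
        gcongr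
        exact Real.sum_mul_le_sqrt_mul_sqrt _ _ _

lemma norm_Tbil_zero_mul_conj_le [Fact p.Prime] (hodd : Odd p) (f₁ f₂ : ZMod p → ℂ) :
    ‖Tbil p f₁ f₂ 0 * conj (f₁ 0 * f₂ 0)‖ ≤ (p : ℝ) ^ (-(1/2) : ℝ) * nsq p f₁ * nsq p f₂ := by
  set c : ℝ := (p : ℝ) ^ (-(1/2) : ℝ)
  rw [norm_mul, Complex.norm_conj, norm_mul]
  calc ‖Tbil p f₁ f₂ 0‖ * (‖f₁ 0‖ * ‖f₂ 0‖)
      ≤ c * (√(nsq p f₁) * √(nsq p f₂)) * (√(nsq p f₁) * √(nsq p f₂)) := by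
        gcongr
        exacts [norm_Tbil_le hodd f₁ f₂ 0, norm_le_sqrt_nsq f₁ 0, norm_le_sqrt_nsq f₂ 0]
    _ = c * nsq p f₁ * nsq p f₂ := by
        linear_combination c * √(nsq p f₂) * √(nsq p f₂) * Real.mul_self_sqrt (nsq_nonneg f₁) +
          c * nsq p f₁ * Real.mul_self_sqrt (nsq_nonneg f₂)

end Estimates

theorem T_norm_sq_bound (p : ℕ) [Fact p.Prime] (hodd : Odd p) (f₁ f₂ : ZMod p → ℂ) :
    ∑ s : ZMod p, ‖Tbil p f₁ f₂ s‖ ^ 2 ≤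
      (p : ℝ) ^ (-(1/2) : ℝ) * nsq p f₁ * nsq p f₂ +
        nsq p f₂ * Real.sqrt (‖Lambda1 p f₁‖) := by
  have hΛ : ‖Lambda1 p f₁‖ = ∑ n₁, ∑ n₂, ‖kerCorr p f₁ n₁ n₂‖ ^ 2 := by
    rw [Lambda1_eq_sum_norm_sq_kerCorr, Complex.norm_real, Real.norm_of_nonneg (by positivity)]
  have hmain : ‖∑ n₁, ∑ n₂, f₂ n₁ * conj (f₂ n₂) * kerCorr p f₁ n₁ n₂‖ ≤
      nsq p f₂ * √(∑ n₁, ∑ n₂, ‖kerCorr p f₁ n₁ n₂‖ ^ 2) :=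
    norm_sum_mul_conj_mul_le f₂ (kerCorr p f₁)
  calc ∑ s, ‖Tbil p f₁ f₂ s‖ ^ 2 = ‖((∑ s, ‖Tbil p f₁ f₂ s‖ ^ 2 : ℝ) : ℂ)‖ := by
        rw [Complex.norm_real, Real.norm_of_nonneg (by positivity)]
    _ ≤ ‖∑ n₁, ∑ n₂, f₂ n₁ * conj (f₂ n₂) * kerCorr p f₁ n₁ n₂‖ +
          ‖Tbil p f₁ f₂ 0 * conj (f₁ 0 * f₂ 0)‖ := by
        rw [sum_norm_sq_Tbil]
        exact norm_sub_le _ _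
    _ ≤ _ := by
        rw [hΛ]
        linarith [norm_Tbil_zero_mul_conj_le hodd f₁ f₂]
end

section
/- Let p be an odd prime and x₁, x₂, x₃ ∈ F_p satisfy x₃ + x₂ = 0 and x₃ ≠ x₁. Then the kernel K₁(x₁,x₂,x₃) = p^{-3} ∑_{y₁,y₂,y₃ ∈ F_p} e_p(x₁y₁² − x₂y₂² − x₃y₃² + (x₃+x₂−x₁)(y₂+y₃−y₁)² + (x₂−x₁)(y₁−y₃)) satisfies |K₁(x₁,x₂,x₃)| ≤ p^{-1}. -/
open Finset Complex

/-- The kernel `K₁(x₁,x₂,x₃) = p^{-3} ∑_{y₁,y₂,y₃} e_p(R₁)`. -/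
noncomputable def K1 (p : ℕ) [NeZero p] (x₁ x₂ x₃ : ZMod p) : ℂ :=
  ((p : ℂ) ^ 3)⁻¹ * ∑ y₁ : ZMod p, ∑ y₂ : ZMod p, ∑ y₃ : ZMod p,
    ep p (x₁ * y₁ ^ 2 - x₂ * y₂ ^ 2 - x₃ * y₃ ^ 2 +
      (x₃ + x₂ - x₁) * (y₂ + y₃ - y₁) ^ 2 + (x₂ - x₁) * (y₁ - y₃))

/-!
Because `x₃ + x₂ = 0`, the phase `R₁` is affine in `y₁`, so the `y₁`-sum is `p` times the
indicator of the vanishing of its slope `2 x₁ (y₂ + y₃) + x₂ − x₁` and `0` otherwise. For fixed `y₂`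
this slope, an affine function of `y₃`, vanishes at most once: it would vanish identically only if
`2 x₁ = 0` and `x₂ = x₁`, forcing `x₃ = x₁`. Hence `|∑ e_p(R₁)| ≤ p · p`.
-/

section AffineCount

variable {R : Type*} [Ring R] [NoZeroDivisors R] [Fintype R] [DecidableEq R]

lemma card_filter_mul_add_eq_zero_le_one {a b : R} (hab : a ≠ 0 ∨ b ≠ 0) :
    #{y | a * y + b = 0} ≤ 1 := by
  refine card_le_one.mpr fun y hy z hz => ?_
  simp only [mem_filter, mem_univ, true_and] at hy hz
  have ha : a ≠ 0 := by
    rintro rfl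
    simp_all
  exact mul_left_cancel₀ ha (add_right_cancel (hy.trans hz.symm))

end AffineCount

section AdditiveCharacter

variable (p : ℕ)

lemma ep_eq_stdAddChar_neg [NeZero p] (x : ZMod p) : ep p x = ZMod.stdAddChar (-x) := by
  rw [AddChar.map_neg_eq_inv, ZMod.stdAddChar_apply, ZMod.toCircle_apply, ep, ← Complex.exp_neg]
  ring_nf

lemma norm_ep [NeZero p] (x : ZMod p) : ‖ep p x‖ = 1 := by
  rw [ep_eq_stdAddChar_neg, ZMod.stdAddChar_apply, Circle.norm_coe]

lemma ep_add [NeZero p] (x y : ZMod p) : ep p (x + y) = ep p x * ep p y := by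
  rw [ep_eq_stdAddChar_neg, ep_eq_stdAddChar_neg, ep_eq_stdAddChar_neg, neg_add,
    AddChar.map_add_eq_mul]

variable [Fact p.Prime]

lemma sum_ep_mul (b : ZMod p) : ∑ u : ZMod p, ep p (b * u) = if b = 0 then (p : ℂ) else 0 := by
  simp_rw [ep_eq_stdAddChar_neg, mul_comm b, ← mul_neg]
  rw [AddChar.sum_mulShift _ (ZMod.isPrimitive_stdAddChar p)]
  simp [ZMod.card]

lemma norm_sum_ep_add_mul (c b : ZMod p) :
    ‖∑ u : ZMod p, ep p (c + b * u)‖ = if b = 0 then (p : ℝ) else 0 := by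
  simp_rw [ep_add, ← mul_sum, sum_ep_mul, norm_mul, norm_ep, one_mul, apply_ite norm,
    norm_natCast, norm_zero]

end AdditiveCharacter

def R1 {R : Type*} [CommRing R] (x₁ x₂ x₃ y₁ y₂ y₃ : R) : R :=
  x₁ * y₁ ^ 2 - x₂ * y₂ ^ 2 - x₃ * y₃ ^ 2 +
    (x₃ + x₂ - x₁) * (y₂ + y₃ - y₁) ^ 2 + (x₂ - x₁) * (y₁ - y₃)

lemma K1_eq_sum_R1 (p : ℕ) [NeZero p] (x₁ x₂ x₃ : ZMod p) :
    K1 p x₁ x₂ x₃ = ((p : ℂ) ^ 3)⁻¹ * ∑ y₁, ∑ y₂, ∑ y₃, ep p (R1 x₁ x₂ x₃ y₁ y₂ y₃) :=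
  rfl

lemma R1_neg_eq_add_mul {R : Type*} [CommRing R] (x₁ x₃ y₁ y₂ y₃ : R) :
    R1 x₁ (-x₃) x₃ y₁ y₂ y₃ =
      R1 x₁ (-x₃) x₃ 0 y₂ y₃ + (2 * x₁ * y₃ + (2 * x₁ * y₂ - x₃ - x₁)) * y₁ := by
  unfold R1
  ring

lemma norm_sum_ep_R1_le (p : ℕ) [Fact p.Prime] {x₁ x₃ : ZMod p} (hne : x₃ ≠ x₁) :
    ‖∑ y₁, ∑ y₂, ∑ y₃, ep p (R1 x₁ (-x₃) x₃ y₁ y₂ y₃)‖ ≤ (p : ℝ) ^ 2 := by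
  have hslope (y₂ : ZMod p) : 2 * x₁ ≠ 0 ∨ 2 * x₁ * y₂ - x₃ - x₁ ≠ 0 := by
    by_contra! hzero
    exact hne (by linear_combination (y₂ - 1) * hzero.1 - hzero.2)
  calc ‖∑ y₁, ∑ y₂, ∑ y₃, ep p (R1 x₁ (-x₃) x₃ y₁ y₂ y₃)‖
      = ‖∑ y₂, ∑ y₃, ∑ y₁, ep p (R1 x₁ (-x₃) x₃ y₁ y₂ y₃)‖ := by
        rw [sum_comm]
        exact congrArg _ (sum_congr rfl fun _ _ => sum_comm)
    _ ≤ ∑ y₂, ∑ y₃, ‖∑ y₁, ep p (R1 x₁ (-x₃) x₃ y₁ y₂ y₃)‖ :=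
        (norm_sum_le _ _).trans (sum_le_sum fun _ _ => norm_sum_le _ _)
    _ = ∑ y₂, ∑ y₃, if 2 * x₁ * y₃ + (2 * x₁ * y₂ - x₃ - x₁) = 0 then (p : ℝ) else 0 := by
        refine sum_congr rfl fun y₂ _ => sum_congr rfl fun y₃ _ => ?_
        rw [← norm_sum_ep_add_mul]
        exact congrArg _ (sum_congr rfl fun y₁ _ => by rw [R1_neg_eq_add_mul])
    _ = ∑ y₂, (#{y₃ | 2 * x₁ * y₃ + (2 * x₁ * y₂ - x₃ - x₁) = 0} : ℝ) * p := by
        simp_rw [← sum_filter, sum_const, nsmul_eq_mul]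
    _ ≤ ∑ _y₂ : ZMod p, 1 * (p : ℝ) := by
        gcongr with y₂
        exact_mod_cast card_filter_mul_add_eq_zero_le_one (hslope y₂)
    _ = (p : ℝ) ^ 2 := by
        rw [sum_const, card_univ, ZMod.card, nsmul_eq_mul]
        ring

theorem K1_bound_of_sum_zero_general (p : ℕ) [Fact p.Prime]
    (x₁ x₂ x₃ : ZMod p) (h : x₃ + x₂ = 0) (hne : x₃ ≠ x₁) :
    ‖K1 p x₁ x₂ x₃‖ ≤ (p : ℝ)⁻¹ := by
  obtain rfl : x₂ = -x₃ := eq_neg_of_add_eq_zero_right h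
  have hp : (0 : ℝ) < p := by exact_mod_cast (Fact.out : p.Prime).pos
  calc ‖K1 p x₁ (-x₃) x₃‖
      = ((p : ℝ) ^ 3)⁻¹ * ‖∑ y₁, ∑ y₂, ∑ y₃, ep p (R1 x₁ (-x₃) x₃ y₁ y₂ y₃)‖ := by
        rw [K1_eq_sum_R1, norm_mul, norm_inv, norm_pow, norm_natCast]
    _ ≤ ((p : ℝ) ^ 3)⁻¹ * (p : ℝ) ^ 2 := by
        gcongr
        exact norm_sum_ep_R1_le p hne
    _ = (p : ℝ)⁻¹ := by
        field_simp

theorem K1_bound_of_sum_zero (p : ℕ) [Fact p.Prime] (hodd : Odd p)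
    (x₁ x₂ x₃ : ZMod p) (h : x₃ + x₂ = 0) (hne : x₃ ≠ x₁) :
    ‖K1 p x₁ x₂ x₃‖ ≤ (p : ℝ)⁻¹ :=
  K1_bound_of_sum_zero_general p x₁ x₂ x₃ h hne
end

section
/- Let p be a prime, f : F_p → ℂ, and K₂ : F_p³ → ℂ a kernel with |K₂(u₁,u₂,u₃)| ≤ C p^{-5/2} for all (u₁,u₂,u₃) with (u₁−u₂)u₃ ≠ 0. Then |∑_{(u₁−u₂)u₃ ≠ 0} f(u₁) conj(f(u₂)) conj(f(u₁+u₃)) f(u₂+u₃) K₂(u₁,u₂,u₃)| ≤ C p^{-3/2} ‖f‖₂⁴. -/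
/-!
Bound `K₂` pointwise by `B = C p^{-5/2}` and drop the restriction `(u₁ - u₂) u₃ ≠ 0`. What is
left is the box sum of `|f|`, which factors over the shift `u₃` as
`∑_{u₃} (∑_{u₁} |f(u₁)| |f(u₁ + u₃)|)²`; by Cauchy–Schwarz and translation invariance each
inner sum is at most `‖f‖₂²`, so the box sum is at most `p ‖f‖₂⁴`, and `B p = C p^{-3/2}`.
-/

open Finset Complex

section BoxSum

variable {G : Type*} [AddCommGroup G] [Fintype G]

theorem sum_mul_shift_sq_le (g : G → ℝ) (t : G) :
    (∑ x, g x * g (x + t)) ^ 2 ≤ (∑ x, g x ^ 2) ^ 2 := by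
  have hshift : ∑ x, g (x + t) ^ 2 = ∑ x, g x ^ 2 :=
    Equiv.sum_comp (Equiv.addRight t) fun x => g x ^ 2
  calc (∑ x, g x * g (x + t)) ^ 2
      ≤ (∑ x, g x ^ 2) * ∑ x, g (x + t) ^ 2 := sum_mul_sq_le_sq_mul_sq _ _ _
    _ = (∑ x, g x ^ 2) ^ 2 := by rw [hshift, sq]

theorem sum_box_eq_sum_sq {R : Type*} [CommRing R] (g : G → R) :
    ∑ u : (G × G) × G, g u.1.1 * g u.1.2 * g (u.1.1 + u.2) * g (u.1.2 + u.2)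
      = ∑ t, (∑ x, g x * g (x + t)) ^ 2 := by
  rw [Fintype.sum_prod_type, Finset.sum_comm]
  refine Finset.sum_congr rfl fun t _ => ?_
  rw [Fintype.sum_prod_type, sq, Finset.sum_mul_sum]
  exact Finset.sum_congr rfl fun x _ => Finset.sum_congr rfl fun y _ => by ring

theorem sum_box_le (g : G → ℝ) :
    ∑ u : (G × G) × G, g u.1.1 * g u.1.2 * g (u.1.1 + u.2) * g (u.1.2 + u.2)
      ≤ Fintype.card G * (∑ x, g x ^ 2) ^ 2 := by
  rw [sum_box_eq_sum_sq]
  simpa using Finset.sum_le_card_nsmul univ _ _ fun t _ => sum_mul_shift_sq_le g t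

end BoxSum

theorem norm_sum_mul_le_of_norm_le {ι 𝕜 : Type*} [SeminormedRing 𝕜] (s : Finset ι)
    (a K : ι → 𝕜) {B : ℝ} (hK : ∀ u ∈ s, ‖K u‖ ≤ B) :
    ‖∑ u ∈ s, a u * K u‖ ≤ ∑ u ∈ s, ‖a u‖ * B :=
  norm_sum_le_of_le s fun u hu =>
    (norm_mul_le _ _).trans (mul_le_mul_of_nonneg_left (hK u hu) (norm_nonneg _))

theorem rpow_neg_five_halves_mul_self {x : ℝ} (hx : x ≠ 0) :
    x ^ (-(5 / 2) : ℝ) * x = x ^ (-(3 / 2) : ℝ) := by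
  rw [← Real.rpow_add_one hx]
  norm_num

theorem K2_kernel_bound (p : ℕ) (hp : p.Prime) :
    ∀ (f : ZMod p → ℂ) (K₂ : ZMod p → ZMod p → ZMod p → ℂ) (C : ℝ),
    (∀ u₁ u₂ u₃ : ZMod p, (u₁ - u₂) * u₃ ≠ 0 →
      ‖K₂ u₁ u₂ u₃‖ ≤ C * (p : ℝ) ^ (-(5/2) : ℝ)) →
    haveI : NeZero p := ⟨hp.ne_zero⟩
    ‖(∑ u ∈ Finset.univ.filter
        (fun u : (ZMod p × ZMod p) × ZMod p => (u.1.1 - u.1.2) * u.2 ≠ 0),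
        f u.1.1 * (starRingEnd ℂ) (f u.1.2) * (starRingEnd ℂ) (f (u.1.1 + u.2)) *
          f (u.1.2 + u.2) * K₂ u.1.1 u.1.2 u.2)‖
      ≤ C * (p : ℝ) ^ (-(3/2) : ℝ) * nsq p f ^ 2 := by
  intro f K₂ C hK
  have : NeZero p := ⟨hp.ne_zero⟩
  have : Fact p.Prime := ⟨hp⟩
  set B := C * (p : ℝ) ^ (-(5/2) : ℝ)
  have hB : 0 ≤ B := (norm_nonneg _).trans (hK 1 0 1 (by simp))
  have hbox := sum_box_le fun x : ZMod p => ‖f x‖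
  rw [ZMod.card] at hbox
  calc _ ≤ ∑ u ∈ univ.filter (fun u : (ZMod p × ZMod p) × ZMod p => (u.1.1 - u.1.2) * u.2 ≠ 0),
          ‖f u.1.1 * (starRingEnd ℂ) (f u.1.2) * (starRingEnd ℂ) (f (u.1.1 + u.2)) *
            f (u.1.2 + u.2)‖ * B :=
        norm_sum_mul_le_of_norm_le _ _ _ fun u hu => hK _ _ _ (mem_filter.1 hu).2
    _ ≤ ∑ u : (ZMod p × ZMod p) × ZMod p,
          ‖f u.1.1‖ * ‖f u.1.2‖ * ‖f (u.1.1 + u.2)‖ * ‖f (u.1.2 + u.2)‖ * B := by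
        simp only [norm_mul, norm_conj]
        exact sum_le_sum_of_subset_of_nonneg (filter_subset _ _) fun u _ _ => by positivity
    _ ≤ p * nsq p f ^ 2 * B := by
        rw [← Finset.sum_mul]
        exact mul_le_mul_of_nonneg_right hbox hB
    _ = C * (p : ℝ) ^ (-(3/2) : ℝ) * nsq p f ^ 2 := by
        rw [← rpow_neg_five_halves_mul_self (Nat.cast_ne_zero.2 hp.ne_zero)]
        ring
end
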